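/- arXiv:1402.3736 — 5 statements merged into one kernel-verified Lean document; each statement's English description precedes it below -/
import Mathlib

section
/- For every countable partial order (Q, ≤_Q) there exists a map U from Q to the collection of finite nonempty sets of positive integers such that for all x, y ∈ Q: x ≤_Q y if and only if for every a ∈ U(x) there exists b ∈ U(y) with b dividing a. That is, the order (P, ≤_P) is a universal partial order. -/
/-- Encode a finite set of naturals as a positive integer: the product of the
corresponding primes. -/
noncomputable def dsCode (S : Finset ℕ) : ℕ+ :=
  ⟨∏ j ∈ S, Nat.nth Nat.Prime j,
    Finset.prod_pos fun j _ => (Nat.prime_nth_prime j).pos⟩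

lemma dsCode_dvd {S T : Finset ℕ} : dsCode S ∣ dsCode T ↔ S ⊆ T := by
  rw [PNat.dvd_iff]
  show (∏ j ∈ S, Nat.nth Nat.Prime j) ∣ (∏ j ∈ T, Nat.nth Nat.Prime j) ↔ S ⊆ T
  constructor
  · intro h j hj
    have hp : (Nat.nth Nat.Prime j).Prime := Nat.prime_nth_prime j
    have hd : Nat.nth Nat.Prime j ∣ ∏ i ∈ T, Nat.nth Nat.Prime i :=
      dvd_trans (Finset.dvd_prod_of_mem _ hj) h
    obtain ⟨i, hi, hdvd⟩ := hp.prime.exists_mem_finset_dvd hd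
    have : Nat.nth Nat.Prime j = Nat.nth Nat.Prime i :=
      (Nat.prime_dvd_prime_iff_eq hp (Nat.prime_nth_prime i)).mp hdvd
    rwa [Nat.nth_injective Nat.infinite_setOf_prime this]
  · intro h
    exact Finset.prod_dvd_prod_of_subset _ _ _ h

/-- **The divisibility-set order is a universal partial order.**
Every countable partial order embeds into the order `(P, ≤_P)` whose elements are
finite nonempty sets of positive integers, with `A ≤_P B` iff every `a ∈ A` is
divisible by some `b ∈ B`. -/
theorem divisibility_set_order_universal (Q : Type) [Countable Q] [PartialOrder Q] :
    ∃ U : Q → Finset ℕ+,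
      (∀ x, (U x).Nonempty) ∧
      (∀ x y : Q, x ≤ y ↔ ∀ a ∈ U x, ∃ b ∈ U y, b ∣ a) := by
  classical
  obtain ⟨e, he⟩ := Countable.exists_injective_nat Q
  -- the truncated up-set of `z` at level `l`, as a set of indices
  set A : Q → ℕ → Finset ℕ :=
    fun z l => (Finset.range (l + 1)).filter (fun j => ∃ w, z ≤ w ∧ e w = j) with hA
  have memA : ∀ z l j, j ∈ A z l ↔ j ≤ l ∧ ∃ w, z ≤ w ∧ e w = j := by
    intro z l j
    simp [hA, Nat.lt_succ_iff]
  -- the family of codes assigned to `x`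
  set V : Q → Set ℕ+ :=
    fun x => {b : ℕ+ | ∃ z l, z ≤ x ∧ e z ≤ e x ∧ e z ≤ l ∧ l ≤ e x ∧ b = dsCode (A z l)}
    with hV
  have hfin : ∀ x : Q, (V x).Finite := by
    intro x
    by_cases hne : Nonempty Q
    · have : V x ⊆ (fun p : ℕ × ℕ => dsCode (A (Function.invFun e p.1) p.2)) ''
          (Set.Iic (e x) ×ˢ Set.Iic (e x)) := by
        rintro b ⟨z, l, _, hz, hzl, hl, rfl⟩
        exact ⟨(e z, l), ⟨hz, hl⟩, by
          simp [Function.leftInverse_invFun he z]⟩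
      exact Set.Finite.subset (Set.Finite.image _ (Set.Finite.prod (Set.finite_Iic _)
        (Set.finite_Iic _))) this
    · exact absurd ⟨x⟩ hne
  refine ⟨fun x => (hfin x).toFinset, ?_, ?_⟩
  · intro x
    refine ⟨dsCode (A x (e x)), ?_⟩
    rw [Set.Finite.mem_toFinset]
    exact ⟨x, e x, le_refl x, le_refl _, le_refl _, le_refl _, rfl⟩
  · intro x y
    constructor
    · -- x ≤ y implies the divisibility condition
      intro hxy a ha
      rw [Set.Finite.mem_toFinset] at ha
      obtain ⟨z, l, hzx, hzex, hzl, hlx, rfl⟩ := ha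
      by_cases hc : e z ≤ e y
      · refine ⟨dsCode (A z (min l (e y))), ?_, ?_⟩
        · rw [Set.Finite.mem_toFinset]
          exact ⟨z, min l (e y), le_trans hzx hxy, hc, le_min hzl hc, min_le_right _ _, rfl⟩
        · rw [dsCode_dvd]
          intro j hj
          rw [memA] at hj ⊢
          exact ⟨le_trans hj.1 (min_le_left _ _), hj.2⟩
      · push_neg at hc
        refine ⟨dsCode (A y (e y)), ?_, ?_⟩
        · rw [Set.Finite.mem_toFinset]
          exact ⟨y, e y, le_refl y, le_refl _, le_refl _, le_refl _, rfl⟩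
        · rw [dsCode_dvd]
          intro j hj
          rw [memA] at hj ⊢
          obtain ⟨hjy, w, hyw, hwj⟩ := hj
          exact ⟨le_trans (le_of_lt (lt_of_le_of_lt hjy hc)) hzl,
            w, le_trans hzx (le_trans hxy hyw), hwj⟩
    · -- the divisibility condition implies x ≤ y
      intro h
      have hax : dsCode (A x (e x)) ∈ (hfin x).toFinset := by
        rw [Set.Finite.mem_toFinset]
        exact ⟨x, e x, le_refl x, le_refl _, le_refl _, le_refl _, rfl⟩
      obtain ⟨b, hb, hdvd⟩ := h _ hax
      rw [Set.Finite.mem_toFinset] at hb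
      obtain ⟨z, l, hzy, hzey, hzl, hly, rfl⟩ := hb
      rw [dsCode_dvd] at hdvd
      have hez : e z ∈ A z l := (memA z l (e z)).mpr ⟨hzl, z, le_refl z, rfl⟩
      have := (memA x (e x) (e z)).mp (hdvd hez)
      obtain ⟨-, w, hxw, hwz⟩ := this
      have : w = z := he hwz
      exact le_trans (this ▸ hxw) hzy
end

section
/- The divisibility partial order is future-finite-universal: for every countable partial order (Q, ≤_Q) in which every up-set {y : x ≤_Q y} is finite, there exists a map E from Q to the positive integers such that x ≤_Q y if and only if E(y) divides E(x). -/
/-!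
Label the elements of `Q` by distinct primes and send `x` to the product of the labels of its
finite up-set `Ici x`. Products of distinct primes divide each other exactly when their index
sets are nested, and `Ici y ⊆ Ici x ↔ x ≤ y`.
-/

open Finset

theorem exists_injective_nat_prime (ι : Type*) [Countable ι] :
    ∃ p : ι → ℕ, Function.Injective p ∧ ∀ i, (p i).Prime := by
  obtain ⟨g, hg⟩ := exists_injective_nat ι
  exact ⟨fun i => Nat.nth Nat.Prime (g i),
    (Nat.nth_injective Nat.infinite_setOfPred_prime).comp hg, fun i => Nat.prime_nth_prime (g i)⟩

section PrimeProducts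

variable {ι : Type*} {p : ι → ℕ}

theorem dvd_prod_primes_iff (hinj : Function.Injective p) (hp : ∀ i, (p i).Prime)
    (s : Finset ι) (i : ι) : p i ∣ ∏ j ∈ s, p j ↔ i ∈ s := by
  refine ⟨fun h => ?_, fun hi => dvd_prod_of_mem p hi⟩
  obtain ⟨j, hj, hij⟩ := (hp i).prime.exists_mem_finset_dvd h
  rwa [hinj ((Nat.prime_dvd_prime_iff_eq (hp i) (hp j)).mp hij)]

theorem prod_primes_dvd_prod_primes_iff (hinj : Function.Injective p) (hp : ∀ i, (p i).Prime)
    (s t : Finset ι) : ∏ i ∈ s, p i ∣ ∏ i ∈ t, p i ↔ s ⊆ t := by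
  refine ⟨fun h i hi => ?_, prod_dvd_prod_of_subset s t p⟩
  exact (dvd_prod_primes_iff hinj hp t i).mp ((dvd_prod_of_mem p hi).trans h)

end PrimeProducts

/-- **The divisibility order is future-finite-universal.**
Every countable partial order in which every up-set is finite embeds into the
positive integers ordered by reverse divisibility (`x ≤_d y` iff `y ∣ x`). -/
theorem divisibility_futureFinite_universal (Q : Type) [Countable Q] [PartialOrder Q]
    (hfuture : ∀ x : Q, {y : Q | x ≤ y}.Finite) :
    ∃ E : Q → ℕ+, ∀ x y : Q, x ≤ y ↔ E y ∣ E x := by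
  obtain ⟨p, hinj, hp⟩ := exists_injective_nat_prime Q
  let up (x : Q) : Finset Q := (hfuture x).toFinset
  refine ⟨fun x => ⟨∏ z ∈ up x, p z, prod_pos fun z _ => (hp z).pos⟩, fun x y => ?_⟩
  refine Iff.trans ?_ PNat.dvd_iff.symm
  rw [PNat.mk_coe, PNat.mk_coe, prod_primes_dvd_prod_primes_iff hinj hp,
    Set.Finite.toFinset_subset_toFinset]
  exact Set.Ici_subset_Ici.symm
end

section
/- For every d ≥ 3, the d-dragon D_d is a Vizing class 2 graph: its chromatic index equals d + 1, i.e., the chromatic number of the line graph L(D_d) equals d + 1. -/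
open SimpleGraph

/-- The edge relation of the `d`-dragon on vertex indices `0,…,d+1`:
vertices `0,…,d` are pairwise adjacent except `0` and `d`, and vertex `d+1`
is adjacent exactly to `0` and `d`. -/
def dragonRel (d : ℕ) (u v : ℕ) : Prop :=
  (u < d + 1 ∧ v < d + 1 ∧ ¬(u = 0 ∧ v = d) ∧ ¬(u = d ∧ v = 0)) ∨
  (u = d + 1 ∧ (v = 0 ∨ v = d))

/-- The `d`-dragon `D_d`: the graph obtained from `K_{d+1}` by replacing one of its
edges by a path on 3 vertices. -/
def dragon (d : ℕ) : SimpleGraph (Fin (d + 2)) :=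
  SimpleGraph.fromRel (fun u v => dragonRel d u.val v.val)

/-!
The edges of `D_d` are properly coloured by `uv ↦ (u + v) mod (d + 1)`: the only two vertices with
the same residue are `0` and `d + 1`, and they have no common neighbour.

Conversely, in an edge colouring with `d` colours every vertex `v ≤ d` has degree `d`, so it sees
every colour. Each colour class is a matching, hence covers an even number of vertices; since it
covers the `d + 1` vertices `v ≤ d`, it covers the vertex `d + 1` exactly when `d` is even. If `d`
is odd this fails for the colour of an edge at `d + 1`; if `d` is even it fails for any of the
`d - 2 ≥ 1` colours missing at `d + 1`.
-/

namespace SimpleGraph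

variable {V α : Type*} {G : SimpleGraph V}

namespace Coloring

variable (C : G.lineGraph.Coloring α)

def edgeColor {v w : V} (h : G.Adj v w) : α := C ⟨s(v, w), G.mem_edgeSet.2 h⟩

lemma edgeColor_symm {v w : V} (h : G.Adj v w) : C.edgeColor h.symm = C.edgeColor h := by
  simp only [edgeColor, Sym2.eq_swap]

lemma eq_of_edgeColor_eq {v a b : V} (ha : G.Adj v a) (hb : G.Adj v b)
    (h : C.edgeColor ha = C.edgeColor hb) : a = b := by
  by_contra hab
  refine C.valid (lineGraph_adj_iff_exists.2 ⟨fun he => hab ?_, v, by simp, by simp⟩) h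
  exact Sym2.congr_right.1 (congrArg Subtype.val he)

def edgeColorClass (c : α) : G.Subgraph where
  verts := {v | ∃ w, ∃ h : G.Adj v w, C.edgeColor h = c}
  Adj v w := ∃ h : G.Adj v w, C.edgeColor h = c
  adj_sub := fun ⟨h, _⟩ => h
  edge_vert := fun ⟨h, hc⟩ => ⟨_, h, hc⟩
  symm := ⟨fun _ _ ⟨h, hc⟩ => ⟨h.symm, by rwa [edgeColor_symm]⟩⟩

lemma isMatching_edgeColorClass (c : α) : (C.edgeColorClass c).IsMatching := by
  rintro v ⟨w, h, hc⟩
  exact ⟨w, ⟨h, hc⟩, fun u ⟨h', hc'⟩ => C.eq_of_edgeColor_eq h' h (hc'.trans hc.symm)⟩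

lemma even_ncard_edgeColorClass_verts [Finite V] (c : α) :
    Even (C.edgeColorClass c).verts.ncard := by
  classical
  have := Fintype.ofFinite V
  rw [Set.ncard_eq_toFinset_card']
  exact (C.isMatching_edgeColorClass c).even_card

lemma mem_edgeColorClass_verts_of_card_le [Finite α] {v : V}
    (hv : Nat.card α ≤ (G.neighborSet v).ncard) (c : α) : v ∈ (C.edgeColorClass c).verts := by
  have hinj : Function.Injective fun w : G.neighborSet v => C.edgeColor w.2 :=
    fun a b h => Subtype.ext (C.eq_of_edgeColor_eq a.2 b.2 h)
  obtain ⟨⟨w, hw⟩, hc⟩ := (hinj.bijective_of_nat_card_le hv).2 c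
  exact ⟨w, hw, hc⟩

end Coloring

end SimpleGraph

lemma dragon_adj {d : ℕ} {u v : Fin (d + 2)} :
    (dragon d).Adj u v ↔ u.val ≠ v.val ∧
      ((u.val ≤ d ∧ v.val ≤ d ∧ ¬(u.val = 0 ∧ v.val = d) ∧ ¬(u.val = d ∧ v.val = 0)) ∨
       (u.val = d + 1 ∧ (v.val = 0 ∨ v.val = d)) ∨
       (v.val = d + 1 ∧ (u.val = 0 ∨ u.val = d))) := by
  rw [dragon, fromRel_adj, dragonRel, dragonRel, ← Fin.val_ne_iff]
  omega

lemma dragon_adj_last {d : ℕ} {a : Fin (d + 2)} :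
    (dragon d).Adj (Fin.last (d + 1)) a ↔ a.val = 0 ∨ a.val = d := by
  rw [dragon_adj, Fin.val_last]
  omega

lemma dragon_ncard_neighborSet {d : ℕ} (hd : d ≠ 0) {v : Fin (d + 2)} (hv : v.val ≤ d) :
    ((dragon d).neighborSet v).ncard = d := by
  obtain ⟨p, hpv, hp⟩ : ∃ p : Fin (d + 2), p ≠ v ∧
      ∀ a, (dragon d).Adj v a ↔ a ∉ ({v, p} : Set (Fin (d + 2))) := by
    refine ⟨if v.val = 0 then ⟨d, by omega⟩ else if v.val = d then 0 else Fin.last (d + 1),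
      ?_, fun a => ?_⟩ <;>
    · simp only [Set.mem_insert_iff, Set.mem_singleton_iff, dragon_adj, ne_eq, Fin.ext_iff,
        apply_ite Fin.val, Fin.val_last, Fin.val_zero]
      split_ifs <;> omega
  have hnbr : (dragon d).neighborSet v = {v, p}ᶜ := Set.ext hp
  rw [hnbr, Set.ncard_compl, Set.ncard_pair hpv.symm, Nat.card_fin]
  omega

lemma Nat.eq_or_of_mod_succ_eq {n a b : ℕ} (ha : a ≤ n + 1) (hb : b ≤ n + 1)
    (h : a % (n + 1) = b % (n + 1)) : a = b ∨ (a = 0 ∧ b = n + 1) ∨ (a = n + 1 ∧ b = 0) := by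
  rcases ha.lt_or_eq with ha | rfl <;> rcases hb.lt_or_eq with hb | rfl <;>
    simp_all [Nat.mod_eq_of_lt]

def dragonEdgeColoring (d : ℕ) : (dragon d).lineGraph.Coloring (ZMod (d + 1)) := by
  refine Coloring.mk
    (fun e => Sym2.lift ⟨fun u v => (u.val + v.val : ZMod (d + 1)), fun _ _ => add_comm _ _⟩ e.1) ?_
  rintro ⟨e₁, he₁⟩ ⟨e₂, he₂⟩ hadj hc
  obtain ⟨hne, w, hw₁, hw₂⟩ := lineGraph_adj_iff_exists.1 hadj
  obtain ⟨a, rfl⟩ := Sym2.mem_iff_exists.1 hw₁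
  obtain ⟨b, rfl⟩ := Sym2.mem_iff_exists.1 hw₂
  have ha := dragon_adj.1 ((dragon d).mem_edgeSet.1 he₁)
  have hb := dragon_adj.1 ((dragon d).mem_edgeSet.1 he₂)
  have hab : a.val ≠ b.val := fun h => hne (by simp [Fin.ext h])
  simp only [Sym2.lift_mk, add_right_inj, ZMod.natCast_eq_natCast_iff'] at hc
  have := Nat.eq_or_of_mod_succ_eq (by omega) (by omega) hc
  omega

lemma dragon_lineGraph_colorable (d : ℕ) : (dragon d).lineGraph.Colorable (d + 1) := by
  simpa using (dragonEdgeColoring d).colorable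

lemma dragon_lineGraph_not_colorable {d : ℕ} (hd : 3 ≤ d) :
    ¬ (dragon d).lineGraph.Colorable d := by
  intro hcol
  obtain ⟨C⟩ : Nonempty ((dragon d).lineGraph.Coloring (Fin d)) := hcol
  set L := Fin.last (d + 1)
  have hsees : ∀ c, ∀ v ≠ L, v ∈ (C.edgeColorClass c).verts := fun c v hv =>
    C.mem_edgeColorClass_verts_of_card_le (by
      rw [Nat.card_fin, dragon_ncard_neighborSet (by omega)]
      exact Nat.le_of_lt_succ (Fin.val_lt_last hv)) c
  have hL : ∀ c, L ∈ (C.edgeColorClass c).verts ↔ Even d := by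
    intro c
    have hdiff : (C.edgeColorClass c).verts \ {L} = {L}ᶜ := by
      ext v; simpa using hsees c v
    have hcompl : ({L}ᶜ : Set (Fin (d + 2))).ncard = d + 1 := by
      rw [Set.ncard_compl, Set.ncard_singleton, Nat.card_fin]; rfl
    have heven := C.even_ncard_edgeColorClass_verts c
    by_cases hLS : L ∈ (C.edgeColorClass c).verts
    · rw [← Set.ncard_sdiff_singleton_add_one hLS, hdiff, hcompl] at heven
      simpa [hLS, Nat.even_add_one] using heven
    · rw [← Set.sdiff_singleton_eq_self hLS, hdiff, hcompl] at heven
      simpa [hLS, Nat.even_add_one] using heven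
  have h₀ : (dragon d).Adj L 0 := dragon_adj_last.2 (Or.inl rfl)
  have h₁ : (dragon d).Adj L (Fin.last d).castSucc := dragon_adj_last.2 (by simp)
  rcases Nat.even_or_odd d with heven | hodd
  · obtain ⟨c, -, hc⟩ :
        ∃ c ∈ Finset.univ, c ∉ ({C.edgeColor h₀, C.edgeColor h₁} : Finset (Fin d)) :=
      Finset.exists_mem_notMem_of_card_lt_card
        ((Finset.card_le_two).trans_lt (by simp; omega))
    obtain ⟨w, hw, rfl⟩ := (hL c).2 heven
    rcases dragon_adj_last.1 hw with hw0 | hwd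
    · obtain rfl : w = 0 := Fin.ext hw0
      simp at hc
    · obtain rfl : w = (Fin.last d).castSucc := Fin.ext (by simpa using hwd)
      simp at hc
  · exact Nat.not_even_iff_odd.2 hodd ((hL _).1 ⟨0, h₀, rfl⟩)

/-- **Dragons are Vizing class 2.** For every `d ≥ 3` the chromatic index of the
`d`-dragon, i.e. the chromatic number of its line graph, equals `d + 1`. -/
theorem dragon_chromatic_index (d : ℕ) (hd : 3 ≤ d) :
    (dragon d).lineGraph.chromaticNumber = (d + 1 : ℕ) := by
  rw [Nat.cast_add_one]
  exact chromaticNumber_eq_iff_colorable_not_colorable.2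
    ⟨dragon_lineGraph_colorable d, dragon_lineGraph_not_colorable hd⟩
end

section
/- The line graph L(D_3) of the 3-dragon is not 3-colorable (its chromatic number is 4), while for every vertex v of L(D_3) the subgraph induced on the remaining vertices is 3-colorable. -/
/-
Color classes of an edge coloring are matchings, and a matching of a graph on five vertices
has at most two edges; three colors therefore cover at most six of the seven edges of `D_3`.
Conversely, deleting any edge leaves six edges which split into three matchings of size two,
and giving the deleted edge a fourth color yields a 4-coloring of `L(D_3)`.
-/

open SimpleGraph

open Finset

namespace SimpleGraph

variable {V : Type*} {G : SimpleGraph V}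

theorem Colorable.card_le_mul_of_isIndepSet_card_le [Fintype V] {k a : ℕ} (hG : G.Colorable k)
    (hindep : ∀ s : Finset V, G.IsIndepSet s → #s ≤ a) : Fintype.card V ≤ k * a := by
  classical
  obtain ⟨C⟩ := hG
  calc Fintype.card V = ∑ c : Fin k, #{v | C v = c} :=
        card_eq_sum_card_fiberwise (fun v _ => mem_univ (C v))
    _ ≤ ∑ _c : Fin k, a := sum_le_sum fun c _ => hindep _ fun v hv w hw _ =>
        C.not_adj_of_mem_colorClass (mem_filter.1 hv).2 (mem_filter.1 hw).2
    _ = k * a := by simp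

theorem IsIndepSet.two_mul_card_le_of_lineGraph [Fintype V] {s : Finset G.edgeSet}
    (hs : G.lineGraph.IsIndepSet s) : 2 * #s ≤ Fintype.card V := by
  classical
  have hdisj : (s : Set G.edgeSet).PairwiseDisjoint fun e => (e : Sym2 V).toFinset := by
    intro e he f hf hef
    refine Finset.disjoint_left.2 fun v hve hvf => hs he hf hef ?_
    exact lineGraph_adj_iff_exists.2 ⟨hef, v, Sym2.mem_toFinset.1 hve, Sym2.mem_toFinset.1 hvf⟩
  calc 2 * #s = ∑ e ∈ s, #(e : Sym2 V).toFinset := by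
        rw [sum_congr rfl fun e _ => Sym2.card_toFinset_of_not_isDiag _
          (G.not_isDiag_of_mem_edgeSet e.2), sum_const, smul_eq_mul, mul_comm]
    _ = #(s.biUnion fun e => (e : Sym2 V).toFinset) := (card_biUnion hdisj).symm
    _ ≤ Fintype.card V := card_le_univ _

theorem Colorable.card_edgeSet_le_of_lineGraph [Fintype V] [Fintype G.edgeSet] {k : ℕ}
    (h : G.lineGraph.Colorable k) : Fintype.card G.edgeSet ≤ k * (Fintype.card V / 2) :=
  h.card_le_mul_of_isIndepSet_card_le fun _ hs => (Nat.le_div_iff_mul_le two_pos).2 <| by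
    rw [mul_comm]; exact hs.two_mul_card_le_of_lineGraph

theorem Colorable.of_induce_compl_singleton {v : V} {n : ℕ}
    (h : (G.induce {v}ᶜ).Colorable n) : G.Colorable (n + 1) := by
  classical
  obtain ⟨C⟩ := h
  refine ⟨Coloring.mk (fun w => if hw : w = v then Fin.last n else (C ⟨w, hw⟩).castSucc) ?_⟩
  intro u w huw
  by_cases hu : u = v <;> by_cases hw : w = v
  · exact absurd (hu.trans hw.symm) huw.ne
  · simp [hu, hw, (Fin.castSucc_lt_last _).ne']
  · simp [hu, hw, (Fin.castSucc_lt_last _).ne]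
  · simpa [hu, hw] using C.valid (v := ⟨u, hu⟩) (w := ⟨w, hw⟩) huw

end SimpleGraph

instance (d : ℕ) : DecidableRel (dragon d).Adj := fun _ _ => by
  unfold dragon dragonRel; infer_instance

def dragon3Edge : Fin 7 → Sym2 (Fin 5) :=
  ![s(0, 1), s(0, 2), s(1, 2), s(1, 3), s(2, 3), s(0, 4), s(3, 4)]

theorem dragon3Edge_mem_edgeSet : ∀ i, dragon3Edge i ∈ (dragon 3).edgeSet := by decide

theorem dragon3Edge_injective : Function.Injective dragon3Edge := by decide

theorem card_dragon3_edgeSet : Fintype.card (dragon 3).edgeSet = 7 := by decide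

noncomputable def dragon3EdgeEquiv : Fin 7 ≃ (dragon 3).edgeSet :=
  Equiv.ofBijective (fun i => ⟨dragon3Edge i, dragon3Edge_mem_edgeSet i⟩) <|
    (Fintype.bijective_iff_injective_and_card _).2
      ⟨fun _ _ h => dragon3Edge_injective (congrArg Subtype.val h), card_dragon3_edgeSet.symm⟩

/-- Row `i` is a proper 3-edge-coloring of `D_3` with the edge `dragon3Edge i` deleted;
the entry of the deleted edge itself is arbitrary. -/
def dragon3DeletionColoring : Fin 7 → Fin 7 → Fin 3 :=
  ![![0, 0, 1, 0, 2, 2, 1],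
    ![0, 0, 1, 2, 0, 2, 1],
    ![0, 1, 0, 2, 0, 2, 1],
    ![0, 1, 2, 0, 0, 2, 1],
    ![0, 1, 2, 1, 0, 2, 0],
    ![0, 1, 2, 1, 0, 0, 2],
    ![0, 1, 2, 1, 0, 2, 0]]

theorem dragon3DeletionColoring_ne : ∀ i j k, j ≠ i → k ≠ i → j ≠ k →
    (∃ v, v ∈ dragon3Edge j ∧ v ∈ dragon3Edge k) →
    dragon3DeletionColoring i j ≠ dragon3DeletionColoring i k := by decide

theorem dragon3_lineGraph_not_colorable_three : ¬ (dragon 3).lineGraph.Colorable 3 := fun h => by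
  have := h.card_edgeSet_le_of_lineGraph
  rw [card_dragon3_edgeSet, Fintype.card_fin] at this
  omega

theorem dragon3_lineGraph_induce_compl_colorable_three (v : (dragon 3).edgeSet) :
    ((dragon 3).lineGraph.induce {v}ᶜ).Colorable 3 := by
  obtain ⟨i, rfl⟩ := dragon3EdgeEquiv.surjective v
  refine ⟨Coloring.mk (fun w => dragon3DeletionColoring i (dragon3EdgeEquiv.symm w)) ?_⟩
  rintro ⟨u, hu⟩ ⟨w, hw⟩ huw
  obtain ⟨j, rfl⟩ := dragon3EdgeEquiv.surjective u
  obtain ⟨k, rfl⟩ := dragon3EdgeEquiv.surjective w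
  obtain ⟨hjk, x, hxj, hxk⟩ := lineGraph_adj_iff_exists.1 huw
  simp only [Equiv.symm_apply_apply]
  exact dragon3DeletionColoring_ne i j k (fun h => hu (congrArg _ h)) (fun h => hw (congrArg _ h))
    (fun h => hjk (by subst h; rfl)) ⟨x, hxj, hxk⟩

/-- **`L(D_3)` is vertex-critically non-3-colorable.** The line graph of the 3-dragon
is not 3-colorable (its chromatic number is 4), while deleting any single vertex
leaves a 3-colorable graph. -/
theorem dragon3_lineGraph_critical :
    ¬ (dragon 3).lineGraph.Colorable 3 ∧
    (dragon 3).lineGraph.chromaticNumber = 4 ∧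
    ∀ v : (dragon 3).edgeSet,
      ((dragon 3).lineGraph.induce {v}ᶜ).Colorable 3 := by
  have hnot3 := dragon3_lineGraph_not_colorable_three
  have hcol4 : (dragon 3).lineGraph.Colorable 4 :=
    (dragon3_lineGraph_induce_compl_colorable_three (dragon3EdgeEquiv 0)).of_induce_compl_singleton
  exact ⟨hnot3, chromaticNumber_eq_iff_colorable_not_colorable.2 ⟨hcol4, hnot3⟩,
    dragon3_lineGraph_induce_compl_colorable_three⟩
end

section
/- For all integers n ≥ 3 and m ≥ 3, there exists a locally injective graph homomorphism from the sunlet graph S_n to the sunlet graph S_m if and only if m divides n. -/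
open SimpleGraph

/-- The `n`-sunlet: a cycle `C_n` (`Sum.inl` vertices) with a pendant vertex
(`Sum.inr`) attached to each cycle vertex. -/
def sunlet (n : ℕ) : SimpleGraph (Fin n ⊕ Fin n) :=
  SimpleGraph.fromRel (fun u v =>
    match u, v with
    | Sum.inl i, Sum.inl j => j.val = (i.val + 1) % n
    | Sum.inl i, Sum.inr j => i = j
    | _, _ => False)

lemma sunlet_adj_ll {n : ℕ} (i j : Fin n) :
    (sunlet n).Adj (.inl i) (.inl j) ↔ i ≠ j ∧ ((j:ℕ) = (i + 1) % n ∨ (i:ℕ) = (j + 1) % n) := by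
  simp [sunlet, SimpleGraph.fromRel_adj]

lemma sunlet_adj_lr {n : ℕ} (i j : Fin n) :
    (sunlet n).Adj (.inl i) (.inr j) ↔ i = j := by
  simp [sunlet, SimpleGraph.fromRel_adj]

lemma sunlet_adj_rl {n : ℕ} (i j : Fin n) :
    (sunlet n).Adj (.inr i) (.inl j) ↔ i = j := by
  simp [sunlet, SimpleGraph.fromRel_adj, eq_comm]

lemma sunlet_adj_rr {n : ℕ} (i j : Fin n) :
    ¬ (sunlet n).Adj (.inr i) (.inr j) := by
  simp [sunlet, SimpleGraph.fromRel_adj]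

lemma mod_succ_ne {m : ℕ} (hm : 2 ≤ m) (a : ℕ) : (a + 1) % m ≠ a % m := by
  rw [Nat.add_mod, Nat.mod_eq_of_lt (by omega : 1 < m)]
  have h1 : a % m < m := Nat.mod_lt _ (by omega)
  rcases Nat.lt_or_ge (a % m + 1) m with h | h
  · rw [Nat.mod_eq_of_lt h]; omega
  · have h2 : a % m + 1 = m := by omega
    rw [h2, Nat.mod_self]; omega

lemma mod_succ_ne' {m : ℕ} (hm : 2 ≤ m) (a : ℕ) : (a % m + 1) % m ≠ a % m := by
  have h := mod_succ_ne hm a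
  rwa [Nat.add_mod, Nat.mod_eq_of_lt (show 1 < m by omega)] at h

lemma mod_add_two_ne {m : ℕ} (hm : 3 ≤ m) (a : ℕ) : (a + 2) % m ≠ a % m := by
  intro h
  have h1 : a ≡ a + 2 [MOD m] := h.symm
  have h2 : (m : ℤ) ∣ ((a + 2 : ℕ) : ℤ) - (a : ℕ) := h1.dvd
  have h3 : ((a + 2 : ℕ) : ℤ) - (a : ℕ) = 2 := by push_cast; ring
  rw [h3] at h2
  have := Int.le_of_dvd (by norm_num) h2
  omega

lemma succ_mod_inj {n : ℕ} {j k : ℕ} (hj : j < n) (hk : k < n)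
    (h : (j + 1) % n = (k + 1) % n) : j = k := by
  rcases Nat.lt_or_ge (j + 1) n with h1 | h1 <;> rcases Nat.lt_or_ge (k + 1) n with h2 | h2
  · rw [Nat.mod_eq_of_lt h1, Nat.mod_eq_of_lt h2] at h; omega
  · have hk1 : k + 1 = n := by omega
    rw [Nat.mod_eq_of_lt h1, hk1, Nat.mod_self] at h; omega
  · have hj1 : j + 1 = n := by omega
    rw [Nat.mod_eq_of_lt h2, hj1, Nat.mod_self] at h; omega
  · omega

lemma natCast_zmod_inj {m a b : ℕ} (ha : a < m) (hb : b < m)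
    (h : (a : ZMod m) = (b : ZMod m)) : a = b := by
  have := (ZMod.natCast_eq_natCast_iff' a b m).mp h
  rwa [Nat.mod_eq_of_lt ha, Nat.mod_eq_of_lt hb] at this

/-- The mod-`m` reduction map on `Fin n`. -/
def red {n : ℕ} (m : ℕ) (hm : 0 < m) (i : Fin n) : Fin m := ⟨i % m, Nat.mod_lt _ hm⟩

/-- **Locally injective homomorphisms between sunlets model divisibility.**
For `n, m ≥ 3`, there is a locally injective graph homomorphism `S_n → S_m` iff
`m` divides `n`. -/
theorem sunlet_locallyInjective_hom_iff_dvd (n m : ℕ) (hn : 3 ≤ n) (hm : 3 ≤ m) :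
    (∃ f : sunlet n →g sunlet m, ∀ v, Set.InjOn f ((sunlet n).neighborSet v)) ↔
      m ∣ n := by
  have hm0 : 0 < m := by omega
  have hn0 : 0 < n := by omega
  constructor
  · rintro ⟨f, hinj⟩
    -- cycle vertices map to cycle vertices
    have key : ∀ i : Fin n, ∃ j : Fin m, f (Sum.inl i) = Sum.inl j := by
      intro i
      rcases hfi : f (Sum.inl i) with j | j
      · exact ⟨j, rfl⟩
      · exfalso
        set b : Fin n := ⟨(i + 1) % n, Nat.mod_lt _ hn0⟩ with hb
        have hib : i ≠ b := by
          intro h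
          have := mod_succ_ne (by omega : 2 ≤ n) (i : ℕ)
          rw [Nat.mod_eq_of_lt i.isLt] at this
          exact this (congrArg Fin.val h).symm
        have hadj1 : (sunlet n).Adj (.inl i) (.inr i) := (sunlet_adj_lr i i).mpr rfl
        have hadj2 : (sunlet n).Adj (.inl i) (.inl b) :=
          (sunlet_adj_ll i b).mpr ⟨hib, Or.inl rfl⟩
        have h1 := f.map_adj hadj1
        have h2 := f.map_adj hadj2
        rw [hfi] at h1 h2
        have e1 : f (Sum.inr i) = Sum.inl j := by
          rcases hfw : f (Sum.inr i) with w | w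
          · rw [hfw] at h1; rw [(sunlet_adj_rl j w).mp h1]
          · rw [hfw] at h1; exact absurd h1 (sunlet_adj_rr j w)
        have e2 : f (Sum.inl b) = Sum.inl j := by
          rcases hfw : f (Sum.inl b) with w | w
          · rw [hfw] at h2; rw [(sunlet_adj_rl j w).mp h2]
          · rw [hfw] at h2; exact absurd h2 (sunlet_adj_rr j w)
        have := hinj (Sum.inl i) (by simpa using hadj1) (by simpa using hadj2)
          (by rw [e1, e2])
        simp at this
    choose g hg using key
    -- the induced map on indices, as a ℕ → ZMod m walk
    set G : ℕ → ZMod m := fun k => ((g ⟨k % n, Nat.mod_lt _ hn0⟩ : Fin m) : ℕ) with hG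
    have idx_adj : ∀ k : ℕ, (sunlet n).Adj (.inl ⟨k % n, Nat.mod_lt _ hn0⟩)
        (.inl ⟨(k + 1) % n, Nat.mod_lt _ hn0⟩) := by
      intro k
      refine (sunlet_adj_ll _ _).mpr ⟨?_, Or.inl ?_⟩
      · intro h
        have := congrArg Fin.val h
        simp only at this
        exact mod_succ_ne (by omega : 2 ≤ n) k this.symm
      · show (k + 1) % n = (k % n + 1) % n
        rw [Nat.add_mod k 1 n, Nat.mod_eq_of_lt (by omega : 1 < n)]
    -- each step is ±1
    have step : ∀ k : ℕ, G (k + 1) = G k + 1 ∨ G (k + 1) = G k - 1 := by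
      intro k
      have hadj := f.map_adj (idx_adj k)
      rw [hg, hg] at hadj
      rcases ((sunlet_adj_ll _ _).mp hadj).2 with h | h
      · left
        have h2 := congrArg (Nat.cast : ℕ → ZMod m) h
        rw [ZMod.natCast_mod] at h2
        push_cast at h2
        simpa [hG] using h2
      · right
        have h2 := congrArg (Nat.cast : ℕ → ZMod m) h
        rw [ZMod.natCast_mod] at h2
        push_cast at h2
        simp only [hG]
        rw [h2]; ring
    -- no backtracking
    have nobt : ∀ k : ℕ, G (k + 2) ≠ G k := by
      intro k h
      have hne : (⟨k % n, Nat.mod_lt _ hn0⟩ : Fin n) ≠ ⟨(k + 2) % n, Nat.mod_lt _ hn0⟩ := by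
        intro he
        exact mod_add_two_ne hn k (congrArg Fin.val he).symm
      have hadj1 : (sunlet n).Adj (.inl ⟨(k+1) % n, Nat.mod_lt _ hn0⟩)
          (.inl ⟨k % n, Nat.mod_lt _ hn0⟩) := ((idx_adj k).symm)
      have hadj2 : (sunlet n).Adj (.inl ⟨(k+1) % n, Nat.mod_lt _ hn0⟩)
          (.inl ⟨(k + 2) % n, Nat.mod_lt _ hn0⟩) := by
        have h := idx_adj (k + 1)
        have he : k + 1 + 1 = k + 2 := by omega
        rwa [he] at h
      have hval : ((g ⟨k % n, Nat.mod_lt _ hn0⟩ : Fin m) : ℕ)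
          = ((g ⟨(k + 2) % n, Nat.mod_lt _ hn0⟩ : Fin m) : ℕ) :=
        natCast_zmod_inj (Fin.is_lt _) (Fin.is_lt _) (by simpa [hG] using h.symm)
      have := hinj (Sum.inl ⟨(k+1) % n, Nat.mod_lt _ hn0⟩)
        (by simpa using hadj1) (by simpa using hadj2)
        (by rw [hg, hg]; exact congrArg Sum.inl (Fin.ext hval))
      exact hne (by simpa using this)
    -- constant direction
    set e : ZMod m := G 1 - G 0 with he
    have he1 : G 1 = G 0 + e := by rw [he]; ring
    have hdir : ∀ k : ℕ, G (k + 1) = G k + e := by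
      intro k
      induction k with
      | zero => exact he1
      | succ k ih =>
        rcases step (k + 1) with h | h
        · rcases step k with h0 | h0
          · have : e = 1 := by
              have : G (k+1) = G k + e := ih
              rw [h0] at this; linear_combination -this
            rw [h, this]
          · -- G(k+1) = G k - 1; then G(k+2) = G(k+1)+1 = G k, contradiction
            exfalso
            exact nobt k (by rw [h, h0]; ring)
        · rcases step k with h0 | h0
          · exfalso
            exact nobt k (by rw [h, h0]; ring)
          · have : e = -1 := by
              have : G (k+1) = G k + e := ih
              rw [h0] at this; linear_combination -this
            rw [h, this]; ring
    have hlin : ∀ k : ℕ, G k = G 0 + k * e := by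
      intro k
      induction k with
      | zero => simp
      | succ k ih => rw [hdir k, ih]; push_cast; ring
    have hGn : G n = G 0 := by
      simp only [hG]
      congr 2
      exact Fin.ext (by simp [Nat.mod_self])
    have hne : (n : ZMod m) * e = 0 := by
      have := hlin n
      rw [hGn] at this
      linear_combination -this
    have hee : e * e = 1 := by
      rcases step 0 with h | h
      · have : e = 1 := by rw [he, h]; ring
        rw [this]; ring
      · have : e = -1 := by rw [he, h]; ring
        rw [this]; ring
    have hzero : (n : ZMod m) = 0 := by
      have := congrArg (· * e) hne
      simp only [zero_mul] at this
      calc (n : ZMod m) = (n : ZMod m) * (e * e) := by rw [hee]; ring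
        _ = 0 := by rw [← mul_assoc]; simpa using this
    haveI : NeZero m := ⟨by omega⟩
    exact (ZMod.natCast_eq_zero_iff n m).mp hzero
  · intro hd
    refine ⟨⟨Sum.map (red m hm0) (red m hm0), ?_⟩, ?_⟩
    · rintro (i|i) (j|j) h <;> simp only [Sum.map_inl, Sum.map_inr]
      · rw [sunlet_adj_ll] at h ⊢
        simp only [red]
        obtain ⟨hne, h | h⟩ := h
        · have hv : (j : ℕ) % m = ((i : ℕ) % m + 1) % m := by
            rw [h, Nat.mod_mod_of_dvd _ hd, Nat.add_mod (i:ℕ) 1 m,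
              Nat.mod_eq_of_lt (by omega : 1 < m)]
          exact ⟨by simp only [Fin.ne_iff_vne]; rw [hv]; exact (mod_succ_ne' (by omega) _).symm,
            Or.inl hv⟩
        · have hv : (i : ℕ) % m = ((j : ℕ) % m + 1) % m := by
            rw [h, Nat.mod_mod_of_dvd _ hd, Nat.add_mod (j:ℕ) 1 m,
              Nat.mod_eq_of_lt (by omega : 1 < m)]
          exact ⟨by simp only [Fin.ne_iff_vne]; rw [hv]; exact mod_succ_ne' (by omega) _,
            Or.inr hv⟩
      · rw [sunlet_adj_lr] at h ⊢; rw [h]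
      · rw [sunlet_adj_rl] at h ⊢; rw [h]
      · exact absurd h (sunlet_adj_rr i j)
    · rintro (i|i) u hu v hv huv
      · -- cycle vertex: neighbors are pendant i and the two cycle neighbors
        simp only [mem_neighborSet] at hu hv
        rcases u with j | j <;> rcases v with k | k
        · rw [sunlet_adj_ll] at hu hv
          replace huv : (Sum.map (red m hm0) (red m hm0) (Sum.inl j : Fin n ⊕ Fin n) : Fin m ⊕ Fin m)
              = Sum.map (red m hm0) (red m hm0) (Sum.inl k : Fin n ⊕ Fin n) := huv
          simp only [Sum.map_inl, Sum.inl.injEq, red, Fin.mk.injEq] at huv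
          obtain ⟨hij, hu⟩ := hu
          obtain ⟨hik, hv⟩ := hv
          congr 1
          apply Fin.ext
          rcases hu with hu | hu <;> rcases hv with hv | hv
          · rw [hu, hv]
          · -- j = (i+1)%n, i = (k+1)%n : residues differ
            exfalso
            have hj : (j : ℕ) % m = ((i:ℕ) + 1) % m := by
              rw [hu, Nat.mod_mod_of_dvd _ hd]
            have hk : ((k : ℕ) + 1) % m = (i : ℕ) % m := by
              conv_rhs => rw [hv]
              rw [Nat.mod_mod_of_dvd _ hd]
            -- from huv : j % m = k % m
            have : ((i:ℕ) + 2) % m = (i:ℕ) % m := by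
              have h1 : ((i:ℕ) + 1 + 1) % m = ((j:ℕ) % m + 1) % m := by
                rw [Nat.add_mod ((i:ℕ)+1) 1 m,
                  Nat.mod_eq_of_lt (by omega : 1 < m), ← hj]
              have h2 : ((j:ℕ) % m + 1) % m = ((k:ℕ) + 1) % m := by
                rw [huv, Nat.add_mod (k:ℕ) 1 m, Nat.mod_eq_of_lt (by omega : 1 < m)]
              calc ((i:ℕ) + 2) % m = ((i:ℕ) + 1 + 1) % m := by ring_nf
                _ = ((k:ℕ) + 1) % m := by rw [h1, h2]
                _ = (i:ℕ) % m := hk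
            exact mod_add_two_ne hm _ this
          · exfalso
            have hj : ((j : ℕ) + 1) % m = (i : ℕ) % m := by
              conv_rhs => rw [hu]
              rw [Nat.mod_mod_of_dvd _ hd]
            have hk : (k : ℕ) % m = ((i:ℕ) + 1) % m := by
              rw [hv, Nat.mod_mod_of_dvd _ hd]
            have : ((i:ℕ) + 2) % m = (i:ℕ) % m := by
              have h1 : ((i:ℕ) + 1 + 1) % m = ((k:ℕ) % m + 1) % m := by
                rw [Nat.add_mod ((i:ℕ)+1) 1 m,
                  Nat.mod_eq_of_lt (by omega : 1 < m), ← hk]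
              have h2 : ((k:ℕ) % m + 1) % m = ((j:ℕ) + 1) % m := by
                rw [← huv, Nat.add_mod (j:ℕ) 1 m, Nat.mod_eq_of_lt (by omega : 1 < m)]
              calc ((i:ℕ) + 2) % m = ((i:ℕ) + 1 + 1) % m := by ring_nf
                _ = ((j:ℕ) + 1) % m := by rw [h1, h2]
                _ = (i:ℕ) % m := hj
            exact mod_add_two_ne hm _ this
          · -- both predecessors
            exact succ_mod_inj j.isLt k.isLt (by rw [← hu, ← hv])
        · exact absurd (show (Sum.map (red m hm0) (red m hm0) (Sum.inl j : Fin n ⊕ Fin n) : Fin m ⊕ Fin m)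
              = Sum.map (red m hm0) (red m hm0) (Sum.inr k : Fin n ⊕ Fin n) from huv) (by simp)
        · exact absurd (show (Sum.map (red m hm0) (red m hm0) (Sum.inr j : Fin n ⊕ Fin n) : Fin m ⊕ Fin m)
              = Sum.map (red m hm0) (red m hm0) (Sum.inl k : Fin n ⊕ Fin n) from huv) (by simp)
        · rw [sunlet_adj_lr] at hu hv
          rw [← hu, ← hv]
      · -- pendant vertex: unique neighbor
        simp only [mem_neighborSet] at hu hv
        rcases u with j | j <;> rcases v with k | k
        · rw [sunlet_adj_rl] at hu hv; rw [← hu, ← hv]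
        · exact absurd hv (sunlet_adj_rr i k)
        · exact absurd hu (sunlet_adj_rr i j)
        · exact absurd hu (sunlet_adj_rr i j)
end
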